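/- (Positivity of c_n for FBDF-2) Let 0 < α < 1, b_0 = (2/3)^α, b_n = (3/2)^{-α} 3^{-n} a_n^{(-α)} for n ≥ 1 with a_n^{(-α)} = Γ(n+α)/(Γ(α)Γ(n+1)), and define c_n = 2b_0 a_n^{(-α)} - Σ_{j=0}^n b_j a_{n-j}^{(-α)}. Then c_n ≥ 0 for all n ≥ 0, and in fact c_n ≥ (4/25) b_0 a_n^{(-α)} for n ≥ 3. -/

import Mathlib

/-- Taylor coefficients of `(1-z)^{-α}`: `a_n^{(-α)} = Γ(n+α)/(Γ(α)Γ(n+1))`. -/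
noncomputable def aNeg (α : ℝ) (n : ℕ) : ℝ :=
  Real.Gamma (n + α) / (Real.Gamma α * (n.factorial : ℝ))

/-- FBDF-2 coefficients: `b_0 = (2/3)^α`, `b_n = (3/2)^{-α} 3^{-n} a_n^{(-α)}`. -/
noncomputable def bFBDF2 (α : ℝ) (n : ℕ) : ℝ :=
  ((3 : ℝ) / 2) ^ (-α) * ((1 : ℝ) / 3) ^ n * aNeg α n

/-- `c_n = 2 b_0 a_n^{(-α)} - Σ_{j=0}^n b_j a_{n-j}^{(-α)}`. -/
noncomputable def cFBDF2 (α : ℝ) (n : ℕ) : ℝ :=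
  2 * bFBDF2 α 0 * aNeg α n -
    ∑ j ∈ Finset.range (n + 1), bFBDF2 α j * aNeg α (n - j)

section Aux

variable {α : ℝ}

lemma aNeg_pos (hα : 0 < α) (n : ℕ) : 0 < aNeg α n := by
  unfold aNeg
  have h1 : 0 < Real.Gamma ((n : ℝ) + α) := Real.Gamma_pos_of_pos (by positivity)
  have h2 : 0 < Real.Gamma α := Real.Gamma_pos_of_pos hα
  have h3 : 0 < (n.factorial : ℝ) := by exact_mod_cast n.factorial_pos
  positivity

lemma aNeg_zero (hα : 0 < α) : aNeg α 0 = 1 := by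
  unfold aNeg
  have h2 : Real.Gamma α ≠ 0 := (Real.Gamma_pos_of_pos hα).ne'
  simp [h2]

lemma aNeg_succ (hα : 0 < α) (n : ℕ) :
    aNeg α (n + 1) = aNeg α n * (((n : ℝ) + α) / ((n : ℝ) + 1)) := by
  unfold aNeg
  have hne : ((n : ℝ) + α) ≠ 0 := by positivity
  have h : ((n + 1 : ℕ) : ℝ) + α = ((n : ℝ) + α) + 1 := by push_cast; ring
  rw [h, Real.Gamma_add_one hne, Nat.factorial_succ]
  have h2 : Real.Gamma α ≠ 0 := (Real.Gamma_pos_of_pos hα).ne'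
  have h3 : (n.factorial : ℝ) ≠ 0 := by exact_mod_cast n.factorial_pos.ne'
  have h4 : ((n : ℝ) + 1) ≠ 0 := by positivity
  push_cast
  field_simp

lemma aNeg_succ_le (hα : 0 < α) (hα1 : α < 1) (n : ℕ) :
    aNeg α (n + 1) ≤ aNeg α n := by
  rw [aNeg_succ hα]
  have h : ((n : ℝ) + α) / ((n : ℝ) + 1) ≤ 1 := by
    rw [div_le_one (by positivity)]; linarith
  nlinarith [aNeg_pos hα n]

lemma aNeg_add_le (hα : 0 < α) (hα1 : α < 1) (n k : ℕ) :
    aNeg α (n + k) ≤ aNeg α n := by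
  induction k with
  | zero => exact le_refl _
  | succ k ih => exact le_trans (aNeg_succ_le hα hα1 (n + k)) ih

lemma aNeg_one (hα : 0 < α) : aNeg α 1 = α := by
  rw [show (1:ℕ) = 0 + 1 from rfl, aNeg_succ hα, aNeg_zero hα]; norm_num

lemma aNeg_le_alpha (hα : 0 < α) (hα1 : α < 1) (n : ℕ) (hn : 1 ≤ n) :
    aNeg α n ≤ α := by
  obtain ⟨k, rfl⟩ := Nat.exists_eq_add_of_le hn
  calc aNeg α (1 + k) ≤ aNeg α 1 := aNeg_add_le hα hα1 1 k
    _ = α := aNeg_one hα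

lemma aNeg_geom (hα : 0 < α) (hα1 : α < 1) (m j : ℕ) (hm : 1 ≤ m) :
    aNeg α m * ((1 + α) / 2) ^ j ≤ aNeg α (m + j) := by
  induction j with
  | zero => simp
  | succ j ih =>
    have hmj : (1 : ℝ) ≤ ((m + j : ℕ) : ℝ) := by
      exact_mod_cast hm.trans (Nat.le_add_right m j)
    have hstep : (1 + α) / 2 ≤ (((m + j : ℕ) : ℝ) + α) / (((m + j : ℕ) : ℝ) + 1) := by
      rw [div_le_div_iff₀ (by norm_num) (by positivity)]
      nlinarith
    have hq : (0 : ℝ) ≤ (1 + α) / 2 := by positivity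
    calc aNeg α m * ((1 + α) / 2) ^ (j + 1)
        = (aNeg α m * ((1 + α) / 2) ^ j) * ((1 + α) / 2) := by ring
      _ ≤ aNeg α (m + j) * ((((m + j : ℕ) : ℝ) + α) / (((m + j : ℕ) : ℝ) + 1)) := by
          apply mul_le_mul ih hstep hq (aNeg_pos hα _).le
      _ = aNeg α (m + j + 1) := (aNeg_succ hα (m + j)).symm

lemma key_sum (hα : 0 < α) (hα1 : α < 1) (m : ℕ) :
    (∑ j ∈ Finset.range (m + 2), (1/3 : ℝ) ^ j * aNeg α j * aNeg α (m + 1 - j))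
      ≤ (3/2 + (1/3 : ℝ) ^ (m + 1)) * aNeg α (m + 1) := by
  set r : ℝ := 2 / (3 * (1 + α)) with hrdef
  have hr0 : (0 : ℝ) < r := by positivity
  have hr1 : r < 1 := by
    rw [hrdef, div_lt_one (by positivity)]; nlinarith
  have han : 0 < aNeg α (m + 1) := aNeg_pos hα _
  rw [Finset.sum_range_succ, Finset.sum_range_succ']
  have hlast : (1/3 : ℝ) ^ (m+1) * aNeg α (m+1) * aNeg α (m + 1 - (m+1))
      = (1/3 : ℝ) ^ (m+1) * aNeg α (m+1) := by
    simp [aNeg_zero hα]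
  have hfirst : (1/3 : ℝ) ^ 0 * aNeg α 0 * aNeg α (m + 1 - 0) = aNeg α (m+1) := by
    simp [aNeg_zero hα]
  rw [hlast, hfirst]
  -- middle terms
  have hmid : (∑ j ∈ Finset.range m, (1/3 : ℝ) ^ (j+1) * aNeg α (j+1) * aNeg α (m + 1 - (j+1)))
      ≤ ∑ j ∈ Finset.range m, α * aNeg α (m+1) * r ^ (j+1) := by
    apply Finset.sum_le_sum
    intro j hj
    have hjm : j < m := Finset.mem_range.mp hj
    have h1m : 1 ≤ m - j := by omega
    have hsub : m + 1 - (j + 1) = m - j := by omega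
    have hadd : (m - j) + (j + 1) = m + 1 := by omega
    rw [hsub]
    have hgeom := aNeg_geom hα hα1 (m - j) (j + 1) h1m
    rw [hadd] at hgeom
    have hq : (0:ℝ) < ((1 + α)/2) ^ (j+1) := by positivity
    have hmj : aNeg α (m - j) ≤ aNeg α (m+1) * (2/(1+α)) ^ (j+1) := by
      rw [← le_div_iff₀ hq] at hgeom
      calc aNeg α (m - j) ≤ aNeg α (m+1) / ((1+α)/2) ^ (j+1) := hgeom
        _ = aNeg α (m+1) * (2/(1+α)) ^ (j+1) := by
            rw [div_eq_mul_inv, ← inv_pow]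
            congr 2
            field_simp
    have hja : aNeg α (j+1) ≤ α := aNeg_le_alpha hα hα1 (j+1) (by omega)
    have hjpos := (aNeg_pos hα (j+1)).le
    have hmjpos := (aNeg_pos hα (m - j)).le
    calc (1/3 : ℝ) ^ (j+1) * aNeg α (j+1) * aNeg α (m - j)
        ≤ (1/3 : ℝ) ^ (j+1) * α * (aNeg α (m+1) * (2/(1+α)) ^ (j+1)) := by
          apply mul_le_mul (by nlinarith [pow_pos (show (0:ℝ) < 1/3 by norm_num) (j+1)]) hmj hmjpos
          positivity
      _ = α * aNeg α (m+1) * r ^ (j+1) := by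
          rw [hrdef, show (2 : ℝ)/(3*(1+α)) = (1/3) * (2/(1+α)) by field_simp, mul_pow]
          ring
  have hgsum : (∑ j ∈ Finset.range m, α * aNeg α (m+1) * r ^ (j+1))
      ≤ (1/2) * aNeg α (m+1) := by
    have hsum : (∑ j ∈ Finset.range m, r ^ j) ≤ 1 / (1 - r) := by
      have hgm := geom_sum_mul r m
      rw [le_div_iff₀ (by linarith : (0:ℝ) < 1 - r)]
      have : (0:ℝ) ≤ r ^ m := by positivity
      nlinarith
    have heq : (∑ j ∈ Finset.range m, α * aNeg α (m+1) * r ^ (j+1))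
        = α * aNeg α (m+1) * r * (∑ j ∈ Finset.range m, r ^ j) := by
      rw [Finset.mul_sum]
      apply Finset.sum_congr rfl
      intro j _; ring
    rw [heq]
    have h2 : α * aNeg α (m+1) * r * (∑ j ∈ Finset.range m, r ^ j)
        ≤ α * aNeg α (m+1) * r * (1 / (1 - r)) := by
      apply mul_le_mul_of_nonneg_left hsum (by positivity)
    refine h2.trans ?_
    have : α * r * (1 / (1 - r)) ≤ 1/2 := by
      have h1r : (1:ℝ) - r = (1 + 3*α)/(3*(1+α)) := by rw [hrdef]; field_simp; ring
      have heq2 : α * r * (1 / (1 - r)) = 2*α/(1+3*α) := by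
        rw [h1r, hrdef]; field_simp
      rw [heq2, div_le_div_iff₀ (by linarith) (by norm_num)]
      linarith
    nlinarith
  nlinarith [hmid.trans hgsum]

lemma c_eq (hα : 0 < α) (n : ℕ) :
    cFBDF2 α n = ((3 : ℝ)/2) ^ (-α) *
      (2 * aNeg α n - ∑ j ∈ Finset.range (n + 1), (1/3 : ℝ) ^ j * aNeg α j * aNeg α (n - j)) := by
  unfold cFBDF2 bFBDF2
  rw [aNeg_zero hα]
  rw [show (∑ j ∈ Finset.range (n + 1),
        ((3 : ℝ)/2) ^ (-α) * ((1 : ℝ)/3) ^ j * aNeg α j * aNeg α (n - j))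
      = ((3 : ℝ)/2) ^ (-α) * ∑ j ∈ Finset.range (n + 1),
        (1/3 : ℝ) ^ j * aNeg α j * aNeg α (n - j) by
    rw [Finset.mul_sum]; apply Finset.sum_congr rfl; intro j _; ring]
  ring

lemma b0_eq (hα : 0 < α) : bFBDF2 α 0 = ((3 : ℝ)/2) ^ (-α) := by
  unfold bFBDF2
  rw [aNeg_zero hα]
  ring

end Aux

theorem stmt18 (α : ℝ) (hα : 0 < α) (hα1 : α < 1) :
    (∀ n : ℕ, 0 ≤ cFBDF2 α n) ∧
    (∀ n : ℕ, 3 ≤ n → (4 / 25) * bFBDF2 α 0 * aNeg α n ≤ cFBDF2 α n) := by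
  have hb0 : (0 : ℝ) < ((3 : ℝ)/2) ^ (-α) := Real.rpow_pos_of_pos (by norm_num) _
  constructor
  · intro n
    match n with
    | 0 =>
      rw [c_eq hα]
      simp [aNeg_zero hα]
      positivity
    | (m + 1) =>
      rw [c_eq hα]
      have hk := key_sum hα hα1 m
      have hp : (1/3 : ℝ) ^ (m + 1) ≤ 1/3 := by
        calc (1/3 : ℝ) ^ (m + 1) ≤ (1/3 : ℝ) ^ 1 :=
              pow_le_pow_of_le_one (by norm_num) (by norm_num) (by omega)
          _ = 1/3 := pow_one _
      have han : 0 < aNeg α (m + 1) := aNeg_pos hα _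
      have : (∑ j ∈ Finset.range (m + 2), (1/3 : ℝ) ^ j * aNeg α j * aNeg α (m + 1 - j))
          ≤ 2 * aNeg α (m + 1) := by nlinarith
      nlinarith
  · intro n hn
    obtain ⟨m, rfl⟩ : ∃ m, n = m + 1 := ⟨n - 1, by omega⟩
    rw [c_eq hα, b0_eq hα]
    have hk := key_sum hα hα1 m
    have hp : (1/3 : ℝ) ^ (m + 1) ≤ 1/27 := by
      calc (1/3 : ℝ) ^ (m + 1) ≤ (1/3 : ℝ) ^ 3 :=
            pow_le_pow_of_le_one (by norm_num) (by norm_num) (by omega)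
        _ = 1/27 := by norm_num
    have han : 0 < aNeg α (m + 1) := aNeg_pos hα _
    have hs : (∑ j ∈ Finset.range (m + 2), (1/3 : ℝ) ^ j * aNeg α j * aNeg α (m + 1 - j))
        ≤ (46/25) * aNeg α (m + 1) := by nlinarith
    nlinarith
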